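/- Let U* ∈ ℝ^{n×d} with orthonormal columns, let A ∈ ℝ^{d×N} with rank(A) = d and smallest singular value σ_min(A) > 0, let E ∈ ℝ^{n×N}, and set X = U*A + E. If Û ∈ ℝ^{n×d} is orthonormal and its columns are left singular vectors of X corresponding to its top d singular values, then ‖ÛÛᵀ − U*U*ᵀ‖_F ≤ 4‖E‖_F / σ_min(A). -/

import Mathlib

open Matrix

/-- Smallest singular value of a `d × N` matrix `A` (for `rank A = d`): the
infimum of `‖uᵀA‖` over unit vectors `u ∈ ℝ^d`. -/
noncomputable def sminRow {d N : ℕ} (A : Matrix (Fin d) (Fin N) ℝ) : ℝ :=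
  sInf {r : ℝ | ∃ u : Fin d → ℝ, Real.sqrt (∑ j, u j ^ 2) = 1 ∧
    r = Real.sqrt (∑ j, (Matrix.vecMul u A) j ^ 2)}

/-! Write `P = ÛÛᵀ` and `P⋆ = U⋆U⋆ᵀ`. Both are orthogonal projections of rank `d`, so
`‖P - P⋆‖_F² = 2‖(I - P)U⋆‖_F²`. Multiplying by `A`, `(I - P)U⋆A = (I - P)X - (I - P)E`. The
second term has norm at most `‖E‖_F`, and so has the first: by Pythagoras and the maximality of
`Û`, `‖(I - P)X‖_F² = ‖X‖² - ‖ÛᵀX‖² ≤ ‖X‖² - ‖U⋆ᵀX‖² = ‖(I - P⋆)E‖²`. Since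
`σ_min(A)‖M‖_F ≤ ‖MA‖_F` (row by row), `‖P - P⋆‖_F ≤ 2√2‖E‖_F / σ_min(A)`. -/

open WithLp

attribute [local instance] Matrix.frobeniusNormedAddCommGroup

namespace Matrix

section Frobenius

variable {m n : Type*} [Fintype m] [Fintype n]

theorem frobenius_norm_sq_eq_sum_rows (M : Matrix m n ℝ) :
    ‖M‖ ^ 2 = ∑ i, ‖toLp 2 (M i)‖ ^ 2 :=
  PiLp.norm_sq_eq_of_L2 _ (toLp 2 fun i => toLp 2 (M i))

theorem frobenius_norm_sq_eq_sum (M : Matrix m n ℝ) : ‖M‖ ^ 2 = ∑ i, ∑ j, M i j ^ 2 := by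
  simp [frobenius_norm_sq_eq_sum_rows, EuclideanSpace.norm_sq_eq]

theorem frobenius_norm_eq_sqrt (M : Matrix m n ℝ) : ‖M‖ = √(∑ i, ∑ j, M i j ^ 2) := by
  rw [← frobenius_norm_sq_eq_sum, Real.sqrt_sq (norm_nonneg M)]

theorem frobenius_norm_sq_eq_trace (M : Matrix m n ℝ) : ‖M‖ ^ 2 = trace (Mᵀ * M) := by
  rw [frobenius_norm_sq_eq_sum, trace, Finset.sum_comm]
  simp [mul_apply, sq]

end Frobenius

section Orthonormal

variable {m k : Type*} [Fintype m] [Fintype k] [DecidableEq k] {Q R : Matrix m k ℝ}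

theorem transpose_mul_mul_cancel {n : Type*} (hQ : Qᵀ * Q = 1) (W : Matrix k n ℝ) :
    Qᵀ * (Q * W) = W := by
  rw [← Matrix.mul_assoc, hQ, Matrix.one_mul]

theorem frobenius_norm_sq_sub_proj {n : Type*} [Fintype n] (hQ : Qᵀ * Q = 1) (Y : Matrix m n ℝ) :
    ‖Y - Q * (Qᵀ * Y)‖ ^ 2 = ‖Y‖ ^ 2 - ‖Qᵀ * Y‖ ^ 2 := by
  simp only [frobenius_norm_sq_eq_trace, ← trace_sub]
  congr 1
  simp only [transpose_sub, transpose_mul, transpose_transpose, Matrix.sub_mul, Matrix.mul_sub,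
    Matrix.mul_assoc, transpose_mul_mul_cancel hQ]
  abel

theorem frobenius_norm_sub_proj_le {n : Type*} [Fintype n] (hQ : Qᵀ * Q = 1) (Y : Matrix m n ℝ) :
    ‖Y - Q * (Qᵀ * Y)‖ ≤ ‖Y‖ := by
  refine (pow_le_pow_iff_left₀ (norm_nonneg _) (norm_nonneg _) two_ne_zero).mp ?_
  rw [frobenius_norm_sq_sub_proj hQ]
  linarith [sq_nonneg ‖Qᵀ * Y‖]

theorem trace_mul_transpose_of_orthonormal (hQ : Qᵀ * Q = 1) :
    trace (Q * Qᵀ) = Fintype.card k := by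
  rw [trace_mul_comm, hQ, trace_one]

theorem frobenius_norm_sq_of_orthonormal (hQ : Qᵀ * Q = 1) : ‖Q‖ ^ 2 = Fintype.card k := by
  rw [frobenius_norm_sq_eq_trace, hQ, trace_one]

theorem frobenius_norm_sq_sub_projections (hQ : Qᵀ * Q = 1) (hR : Rᵀ * R = 1) :
    ‖Q * Qᵀ - R * Rᵀ‖ ^ 2 = 2 * ‖R - Q * (Qᵀ * R)‖ ^ 2 := by
  have hcross : trace (Q * Qᵀ * (R * Rᵀ)) = ‖Qᵀ * R‖ ^ 2 := by
    rw [frobenius_norm_sq_eq_trace, transpose_mul, transpose_transpose, Matrix.mul_assoc Rᵀ,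
      trace_mul_comm Rᵀ]
    simp only [Matrix.mul_assoc]
  have hexpand : (Q * Qᵀ - R * Rᵀ)ᵀ * (Q * Qᵀ - R * Rᵀ)
      = Q * Qᵀ - Q * Qᵀ * (R * Rᵀ) - (R * Rᵀ * (Q * Qᵀ) - R * Rᵀ) := by
    simp only [transpose_sub, transpose_mul, transpose_transpose, Matrix.sub_mul,
      Matrix.mul_sub]
    simp only [Matrix.mul_assoc, transpose_mul_mul_cancel hQ, transpose_mul_mul_cancel hR]
    abel
  rw [frobenius_norm_sq_eq_trace, hexpand, frobenius_norm_sq_sub_proj hQ,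
    frobenius_norm_sq_of_orthonormal hR]
  simp only [trace_sub, trace_mul_transpose_of_orthonormal hQ,
    trace_mul_transpose_of_orthonormal hR]
  rw [trace_mul_comm (R * Rᵀ), hcross]
  ring

end Orthonormal

end Matrix

section SminRow

variable {d N : ℕ}

theorem sminRow_nonneg (A : Matrix (Fin d) (Fin N) ℝ) : 0 ≤ sminRow A :=
  Real.sInf_nonneg (by rintro _ ⟨u, -, rfl⟩; positivity)

theorem sqrt_sum_sq_eq_norm_toLp {ι : Type*} [Fintype ι] (u : ι → ℝ) :
    √(∑ i, u i ^ 2) = ‖toLp 2 u‖ := by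
  simp [EuclideanSpace.norm_eq]

theorem sminRow_mul_norm_le (A : Matrix (Fin d) (Fin N) ℝ) (u : Fin d → ℝ) :
    sminRow A * ‖toLp 2 u‖ ≤ ‖toLp 2 (u ᵥ* A)‖ := by
  rcases eq_or_ne u 0 with rfl | hu
  · simp
  have hc : 0 < ‖toLp 2 u‖ := norm_pos_iff.mpr (by simpa using hu)
  have hunit : sminRow A ≤ ‖toLp 2 ((‖toLp 2 u‖⁻¹ • u) ᵥ* A)‖ := by
    refine csInf_le ⟨0, by rintro _ ⟨v, -, rfl⟩; positivity⟩ ⟨‖toLp 2 u‖⁻¹ • u, ?_, ?_⟩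
    · rw [sqrt_sum_sq_eq_norm_toLp, toLp_smul, norm_smul, norm_inv, norm_norm,
        inv_mul_cancel₀ hc.ne']
    · rw [sqrt_sum_sq_eq_norm_toLp]
  rwa [smul_vecMul, toLp_smul, norm_smul, norm_inv, norm_norm, ← div_eq_inv_mul,
    le_div_iff₀ hc] at hunit

theorem sminRow_mul_frobenius_norm_le {k : Type*} [Fintype k] (A : Matrix (Fin d) (Fin N) ℝ)
    (M : Matrix k (Fin d) ℝ) : sminRow A * ‖M‖ ≤ ‖M * A‖ := by
  have hσ := sminRow_nonneg A
  refine (pow_le_pow_iff_left₀ (by positivity) (norm_nonneg _) two_ne_zero).mp ?_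
  rw [mul_pow, frobenius_norm_sq_eq_sum_rows, frobenius_norm_sq_eq_sum_rows,
    Finset.mul_sum]
  refine Finset.sum_le_sum fun i _ => ?_
  rw [← mul_pow]
  exact pow_le_pow_left₀ (by positivity) (sminRow_mul_norm_le A (M i)) 2

end SminRow

section Wedin

variable {m : Type*} [Fintype m] {d N : ℕ} {Us Uh : Matrix m (Fin d) ℝ}
  {A : Matrix (Fin d) (Fin N) ℝ} {E X : Matrix m (Fin N) ℝ}

theorem frobenius_norm_sub_proj_le_of_top (hUs : Usᵀ * Us = 1) (hUh : Uhᵀ * Uh = 1)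
    (hX : X = Us * A + E) (htop : ‖Usᵀ * X‖ ≤ ‖Uhᵀ * X‖) :
    ‖X - Uh * (Uhᵀ * X)‖ ≤ ‖E‖ := by
  have hres : X - Us * (Usᵀ * X) = E - Us * (Usᵀ * E) := by
    rw [hX, Matrix.mul_add, transpose_mul_mul_cancel hUs, Matrix.mul_add]
    abel
  refine (pow_le_pow_iff_left₀ (norm_nonneg _) (norm_nonneg _) two_ne_zero).mp ?_
  calc ‖X - Uh * (Uhᵀ * X)‖ ^ 2 = ‖X‖ ^ 2 - ‖Uhᵀ * X‖ ^ 2 := frobenius_norm_sq_sub_proj hUh X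
    _ ≤ ‖X‖ ^ 2 - ‖Usᵀ * X‖ ^ 2 := by gcongr
    _ = ‖E - Us * (Usᵀ * E)‖ ^ 2 := by rw [← frobenius_norm_sq_sub_proj hUs, hres]
    _ ≤ ‖E‖ ^ 2 := by gcongr; exact frobenius_norm_sub_proj_le hUs E

theorem sminRow_mul_norm_sub_proj_le (hUs : Usᵀ * Us = 1) (hUh : Uhᵀ * Uh = 1)
    (hX : X = Us * A + E) (htop : ‖Usᵀ * X‖ ≤ ‖Uhᵀ * X‖) :
    sminRow A * ‖Us - Uh * (Uhᵀ * Us)‖ ≤ 2 * ‖E‖ :=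
  calc sminRow A * ‖Us - Uh * (Uhᵀ * Us)‖
      ≤ ‖(Us - Uh * (Uhᵀ * Us)) * A‖ := sminRow_mul_frobenius_norm_le A _
    _ = ‖(X - Uh * (Uhᵀ * X)) - (E - Uh * (Uhᵀ * E))‖ := by
      rw [hX]
      congr 1
      simp only [Matrix.mul_add, Matrix.sub_mul, Matrix.mul_assoc]
      abel
    _ ≤ ‖X - Uh * (Uhᵀ * X)‖ + ‖E - Uh * (Uhᵀ * E)‖ := norm_sub_le _ _
    _ ≤ ‖E‖ + ‖E‖ := add_le_add (frobenius_norm_sub_proj_le_of_top hUs hUh hX htop)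
      (frobenius_norm_sub_proj_le hUh E)
    _ = 2 * ‖E‖ := by ring

theorem frobenius_norm_sub_projections_le (hUs : Usᵀ * Us = 1) (hUh : Uhᵀ * Uh = 1)
    (hX : X = Us * A + E) (htop : ‖Usᵀ * X‖ ≤ ‖Uhᵀ * X‖) (hσ : 0 < sminRow A) :
    ‖Uh * Uhᵀ - Us * Usᵀ‖ ≤ 4 * ‖E‖ / sminRow A := by
  have hσUs := sminRow_mul_norm_sub_proj_le hUs hUh hX htop
  rw [le_div_iff₀ hσ]
  refine (pow_le_pow_iff_left₀ (by positivity) (by positivity) two_ne_zero).mp ?_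
  calc (‖Uh * Uhᵀ - Us * Usᵀ‖ * sminRow A) ^ 2
      = 2 * (sminRow A * ‖Us - Uh * (Uhᵀ * Us)‖) ^ 2 := by
        rw [mul_pow, frobenius_norm_sq_sub_projections hUh hUs]
        ring
    _ ≤ 2 * (2 * ‖E‖) ^ 2 := by gcongr
    _ ≤ (4 * ‖E‖) ^ 2 := by nlinarith [sq_nonneg ‖E‖]

end Wedin

theorem stmt16_general {n d N : ℕ} (Us : Matrix (Fin n) (Fin d) ℝ) (hUs : Usᵀ * Us = 1)
    (A : Matrix (Fin d) (Fin N) ℝ) (hsmin : 0 < sminRow A)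
    (E : Matrix (Fin n) (Fin N) ℝ)
    (X : Matrix (Fin n) (Fin N) ℝ) (hX : X = Us * A + E)
    (Uh : Matrix (Fin n) (Fin d) ℝ) (hUh : Uhᵀ * Uh = 1)
    (htop : ∀ V : Matrix (Fin n) (Fin d) ℝ, Vᵀ * V = 1 →
        ∑ i, ∑ j, (Vᵀ * X) i j ^ 2 ≤ ∑ i, ∑ j, (Uhᵀ * X) i j ^ 2) :
    Real.sqrt (∑ i, ∑ j, (Uh * Uhᵀ - Us * Usᵀ) i j ^ 2)
      ≤ 4 * Real.sqrt (∑ i, ∑ j, E i j ^ 2) / sminRow A := by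
  have htop' : ‖Usᵀ * X‖ ≤ ‖Uhᵀ * X‖ := by
    simpa only [frobenius_norm_eq_sqrt] using Real.sqrt_le_sqrt (htop Us hUs)
  simpa only [frobenius_norm_eq_sqrt] using
    frobenius_norm_sub_projections_le hUs hUh hX htop' hsmin

/-- Wedin-type bound: for `X = U*A + E` with `U*` orthonormal, `rank A = d`,
`σ_min(A) > 0`, and `Û` orthonormal whose columns span a top-`d` left singular
subspace of `X` (i.e. `Û` maximizes `‖VᵀX‖_F` over orthonormal `V`), one has
`‖ÛÛᵀ − U*U*ᵀ‖_F ≤ 4‖E‖_F / σ_min(A)`. -/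
theorem stmt16 {n d N : ℕ} (Us : Matrix (Fin n) (Fin d) ℝ) (hUs : Usᵀ * Us = 1)
    (A : Matrix (Fin d) (Fin N) ℝ) (hrank : A.rank = d) (hsmin : 0 < sminRow A)
    (E : Matrix (Fin n) (Fin N) ℝ)
    (X : Matrix (Fin n) (Fin N) ℝ) (hX : X = Us * A + E)
    (Uh : Matrix (Fin n) (Fin d) ℝ) (hUh : Uhᵀ * Uh = 1)
    (htop : ∀ V : Matrix (Fin n) (Fin d) ℝ, Vᵀ * V = 1 →
        ∑ i, ∑ j, (Vᵀ * X) i j ^ 2 ≤ ∑ i, ∑ j, (Uhᵀ * X) i j ^ 2) :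
    Real.sqrt (∑ i, ∑ j, (Uh * Uhᵀ - Us * Usᵀ) i j ^ 2)
      ≤ 4 * Real.sqrt (∑ i, ∑ j, E i j ^ 2) / sminRow A :=
  stmt16_general Us hUs A hsmin E X hX Uh hUh htop
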